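/- For x = (x₁,x₂) ∈ ℝ² and y = (y₁,y₂,y₃) ∈ ℝ³ define the half-flat incidence condition S(x,y): x₁y₂ + x₂(y₁−y₃) = 0. Then: (i) if y ≠ 0 and y is not a scalar multiple of (1,0,1), there exists a nonzero x ∈ ℝ² with S(x,y), and any two nonzero solutions x, x′ of S(·,y) are proportional (so the fibre over the projective point [y] is a single projective point); (ii) if y is a nonzero scalar multiple of (1,0,1), then S(x,y) holds for every x ∈ ℝ². Consequently, the projection of the incidence variety {([x],[y]) ∈ ℝP¹×ℝP² : S(x,y)} to ℝP² is a bijection over the complement of [1:0:1], and the fibre over [1:0:1] is all of ℝP¹. -/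

import Mathlib

noncomputable section

/-- The half-flat incidence condition `S(x,y) : x₁y₂ + x₂(y₁ − y₃) = 0`. -/
def Scond (x : Fin 2 → ℝ) (y : Fin 3 → ℝ) : Prop :=
  x 0 * y 1 + x 1 * (y 0 - y 2) = 0

/-!
The condition `Scond x y` says that `x` lies in the kernel of the linear form
`x ↦ y₂ x₁ + (y₁ − y₃) x₂` on `ℝ²`. This form vanishes identically exactly when `y` is a multiple
of `(1,0,1)`; otherwise its kernel is a line, so its nonzero points form one projective point.
-/

open Module

namespace Module.Dual

variable {K V : Type*} [Field K] [AddCommGroup V] [Module K V] [FiniteDimensional K V]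
  {f : Dual K V}

theorem finrank_ker_eq_one_of_finrank_eq_two (hf : f ≠ 0) (hV : finrank K V = 2) :
    finrank K (LinearMap.ker f) = 1 := by
  have := finrank_ker_add_one_of_ne_zero hf
  lia

theorem exists_ne_zero_apply_eq_zero (hf : f ≠ 0) (hV : finrank K V = 2) :
    ∃ x, x ≠ 0 ∧ f x = 0 := by
  obtain ⟨x, hx⟩ := finrank_pos_iff_exists_ne_zero.mp
    (finrank_ker_eq_one_of_finrank_eq_two hf hV).ge
  exact ⟨x, by simpa using hx, x.2⟩

theorem exists_eq_smul_of_apply_eq_zero (hf : f ≠ 0) (hV : finrank K V = 2) {x x' : V}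
    (hx : x ≠ 0) (hfx : f x = 0) (hfx' : f x' = 0) : ∃ t : K, x' = t • x := by
  obtain ⟨t, ht⟩ := exists_smul_eq_of_finrank_eq_one (finrank_ker_eq_one_of_finrank_eq_two hf hV)
    (x := ⟨x, hfx⟩) (fun h => hx (congrArg Subtype.val h)) ⟨x', hfx'⟩
  exact ⟨t, congrArg Subtype.val ht.symm⟩

end Module.Dual

def halfFlatForm (y : Fin 3 → ℝ) : Dual ℝ (Fin 2 → ℝ) :=
  y 1 • LinearMap.proj 0 + (y 0 - y 2) • LinearMap.proj 1

theorem scond_iff_halfFlatForm_apply_eq_zero {x : Fin 2 → ℝ} {y : Fin 3 → ℝ} :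
    Scond x y ↔ halfFlatForm y x = 0 := by
  simp [Scond, halfFlatForm, mul_comm]

theorem halfFlatForm_ne_zero {y : Fin 3 → ℝ} (hy : ¬∃ μ : ℝ, y = μ • ![1, 0, 1]) :
    halfFlatForm y ≠ 0 := by
  contrapose! hy
  have h1 : y 1 = 0 := by simpa [halfFlatForm] using LinearMap.congr_fun hy (Pi.single 0 1)
  have h02 : y 0 - y 2 = 0 := by simpa [halfFlatForm] using LinearMap.congr_fun hy (Pi.single 1 1)
  refine ⟨y 0, funext fun i => ?_⟩
  fin_cases i <;> simp [h1, sub_eq_zero.mp h02]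

theorem scond_smul_one_zero_one (x : Fin 2 → ℝ) (μ : ℝ) : Scond x (μ • ![1, 0, 1]) := by
  simp [Scond]

theorem stmt12 :
    -- (i) over a `y` that is not a multiple of `(1,0,1)`, the fibre is a single projective point
    (∀ y : Fin 3 → ℝ, y ≠ 0 → (¬∃ μ : ℝ, y = μ • ![1, 0, 1]) →
      ((∃ x : Fin 2 → ℝ, x ≠ 0 ∧ Scond x y) ∧
        ∀ x x' : Fin 2 → ℝ, x ≠ 0 → x' ≠ 0 → Scond x y → Scond x' y →
          ∃ t : ℝ, x' = t • x)) ∧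
    -- (ii) over a nonzero multiple of `(1,0,1)` the condition holds for every `x`
    (∀ μ : ℝ, μ ≠ 0 → ∀ x : Fin 2 → ℝ, Scond x (μ • ![1, 0, 1])) := by
  refine ⟨fun y _ hy => ?_, fun μ _ x => scond_smul_one_zero_one x μ⟩
  have hf := halfFlatForm_ne_zero hy
  have hV : finrank ℝ (Fin 2 → ℝ) = 2 := by simp
  simp only [scond_iff_halfFlatForm_apply_eq_zero]
  exact ⟨Dual.exists_ne_zero_apply_eq_zero hf hV,
    fun x x' hx _ hfx hfx' => Dual.exists_eq_smul_of_apply_eq_zero hf hV hx hfx hfx'⟩
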